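/- arXiv:1505.03681 — 2 statements merged into one kernel-verified Lean document; each statement's English description precedes it below -/
import Mathlib

section
/- Let S be a finite metric space and S' ⊆ S a subset. Then the weight of a minimum spanning tree of S' is at most 2 times the weight of a minimum spanning tree of S, i.e., w(MST(S')) ≤ 2·w(MST(S)). -/
open SimpleGraph

/-- Total edge weight of a graph on a finite metric space, edge weights = distances. -/
noncomputable def graphWeight {V : Type*} [MetricSpace V] [Fintype V]
    (G : SimpleGraph V) : ℝ :=
  ∑ e ∈ G.edgeSet.toFinite.toFinset,
    Sym2.lift ⟨fun a b => dist a b, fun a b => dist_comm a b⟩ e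

set_option linter.unusedSectionVars false

section Aux

variable {V : Type*} [MetricSpace V]

/-- Sum of distances between consecutive elements of a list. -/
noncomputable def chainSum : List V → ℝ
  | [] => 0
  | [_] => 0
  | a :: b :: t => dist a b + chainSum (b :: t)

lemma chainSum_singleton (a : V) : chainSum [a] = 0 := rfl

lemma chainSum_cons_cons (a b : V) (t : List V) :
    chainSum (a :: b :: t) = dist a b + chainSum (b :: t) := rfl

lemma chainSum_nonneg : ∀ l : List V, 0 ≤ chainSum l
  | [] => le_refl 0
  | [_] => le_refl 0
  | a :: b :: t => by
      rw [chainSum_cons_cons]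
      exact add_nonneg dist_nonneg (chainSum_nonneg (b :: t))

lemma chainSum_le_cons (a : V) : ∀ l : List V, chainSum l ≤ chainSum (a :: l)
  | [] => le_refl 0
  | b :: t => by
      rw [chainSum_cons_cons]
      exact le_add_of_nonneg_left dist_nonneg

lemma chainSum_cons_le (a b : V) : ∀ l : List V,
    chainSum (a :: l) ≤ dist a b + chainSum (b :: l)
  | [] => by
      rw [chainSum_singleton, chainSum_singleton, add_zero]; exact dist_nonneg
  | c :: t => by
      rw [chainSum_cons_cons, chainSum_cons_cons, ← add_assoc]
      exact add_le_add_left (dist_triangle a b c) _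

lemma chainSum_sublist_cons {l₁ l₂ : List V} (h : l₁.Sublist l₂) :
    ∀ a : V, chainSum (a :: l₁) ≤ chainSum (a :: l₂) := by
  induction h with
  | slnil => intro a; exact le_refl _
  | cons b h ih =>
      intro a
      calc chainSum (a :: _) ≤ dist a b + chainSum (b :: _) := chainSum_cons_le a b _
        _ ≤ dist a b + chainSum (b :: _) := by exact add_le_add_right (ih b) _
        _ = chainSum (a :: b :: _) := (chainSum_cons_cons a b _).symm
  | cons_cons b h ih =>
      intro a
      rw [chainSum_cons_cons, chainSum_cons_cons]
      exact add_le_add_right (ih b) _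

lemma chainSum_sublist {l₁ l₂ : List V} (h : l₁.Sublist l₂) :
    chainSum l₁ ≤ chainSum l₂ := by
  induction h with
  | slnil => exact le_refl _
  | cons b h ih => exact le_trans ih (chainSum_le_cons b _)
  | cons_cons b h _ => exact chainSum_sublist_cons h b

lemma chainSum_append_cons : ∀ (l₁ : List V) (a : V) (l₂ : List V),
    chainSum (l₁ ++ a :: l₂) = chainSum (l₁ ++ [a]) + chainSum (a :: l₂)
  | [], a, l₂ => by simp [chainSum_singleton]
  | [x], a, l₂ => by
      simp only [List.cons_append, List.nil_append, chainSum_cons_cons, chainSum_singleton]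
      ring
  | x :: y :: t, a, l₂ => by
      have := chainSum_append_cons (y :: t) a l₂
      simp only [List.cons_append] at *
      rw [chainSum_cons_cons, chainSum_cons_cons, this]
      ring

lemma chainSum_append_of {l₁ l₂ : List V} {x y : V}
    (h1 : l₁.getLast? = some x) (h2 : l₂.head? = some y) :
    chainSum (l₁ ++ l₂) = chainSum l₁ + dist x y + chainSum l₂ := by
  obtain ⟨M, rfl⟩ : ∃ M, l₁ = M ++ [x] := by
    rcases l₁.eq_nil_or_concat with rfl | ⟨M, z, rfl⟩
    · simp at h1
    · simp [List.getLast?_concat] at h1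
      exact ⟨M, by simp [h1]⟩
  obtain ⟨t, rfl⟩ : ∃ t, l₂ = y :: t := by
    cases l₂ with
    | nil => simp at h2
    | cons z t => simp at h2; exact ⟨t, by simp [h2]⟩
  rw [List.append_assoc, List.singleton_append, chainSum_append_cons,
    chainSum_cons_cons]
  ring

lemma chainSum_map {W : Type*} [MetricSpace W] (f : V → W)
    (hf : ∀ x y : V, dist (f x) (f y) = dist x y) :
    ∀ l : List V, chainSum (l.map f) = chainSum l
  | [] => rfl
  | [_] => rfl
  | a :: b :: t => by
      simp only [List.map_cons, chainSum_cons_cons, hf]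
      rw [← List.map_cons, chainSum_map f hf (b :: t)]

/-- The distance, as a function on unordered pairs. -/
noncomputable def ew : Sym2 V → ℝ :=
  Sym2.lift ⟨fun a b => dist a b, fun a b => dist_comm a b⟩

lemma ew_mk (a b : V) : ew s(a, b) = dist a b := rfl

lemma ew_nonneg (e : Sym2 V) : 0 ≤ ew e := by
  induction e using Sym2.ind with
  | _ a b => exact dist_nonneg

/-- Weight of the part of `G` reachable from `a`. -/
noncomputable def wAt [Fintype V] (G : SimpleGraph V) (a : V) : ℝ :=
  ∑ e ∈ (Set.toFinite {e | e ∈ G.edgeSet ∧ ∀ v ∈ e, G.Reachable a v}).toFinset, ew e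

lemma wAt_nonneg [Fintype V] (G : SimpleGraph V) (a : V) : 0 ≤ wAt G a :=
  Finset.sum_nonneg fun e _ => ew_nonneg e

lemma eq_of_reachable_isolated {G : SimpleGraph V} {a v : V}
    (h : ∀ y, ¬ G.Adj a y) (hr : G.Reachable a v) : v = a := by
  obtain ⟨w⟩ := hr
  cases w with
  | nil => rfl
  | cons h' p => exact absurd h' (h _)

lemma reachable_split {G : SimpleGraph V} (a b : V) {u v : V} (p : G.Walk u v) :
    (G \ fromEdgeSet {s(a, b)}).Reachable u v ∨
      ((G \ fromEdgeSet {s(a, b)}).Reachable u a ∧ (G \ fromEdgeSet {s(a, b)}).Reachable b v) ∨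
      ((G \ fromEdgeSet {s(a, b)}).Reachable u b ∧ (G \ fromEdgeSet {s(a, b)}).Reachable a v) := by
  set G' := G \ fromEdgeSet {s(a, b)} with hG'
  induction p with
  | nil => exact Or.inl (Reachable.refl _)
  | @cons u x v h p ih =>
    by_cases he : s(u, x) = s(a, b)
    · rw [Sym2.eq_iff] at he
      rcases he with ⟨rfl, rfl⟩ | ⟨rfl, rfl⟩
      · rcases ih with h1 | ⟨h1, h2⟩ | ⟨h1, h2⟩
        · exact Or.inr (Or.inl ⟨Reachable.refl _, h1⟩)
        · exact Or.inr (Or.inl ⟨Reachable.refl _, h2⟩)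
        · exact Or.inl h2
      · rcases ih with h1 | ⟨h1, h2⟩ | ⟨h1, h2⟩
        · exact Or.inr (Or.inr ⟨Reachable.refl _, h1⟩)
        · exact Or.inl h2
        · exact Or.inr (Or.inr ⟨Reachable.refl _, h2⟩)
    · have hadj : G'.Adj u x := by
        rw [hG', sdiff_adj, fromEdgeSet_adj]
        exact ⟨h, fun hc => he hc.1⟩
      rcases ih with h1 | ⟨h1, h2⟩ | ⟨h1, h2⟩
      · exact Or.inl (hadj.reachable.trans h1)
      · exact Or.inr (Or.inl ⟨hadj.reachable.trans h1, h2⟩)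
      · exact Or.inr (Or.inr ⟨hadj.reachable.trans h1, h2⟩)

lemma not_reachable_delete {G : SimpleGraph V} (hacyc : G.IsAcyclic) {a b : V}
    (hab : G.Adj a b) : ¬ (G \ fromEdgeSet {s(a, b)}).Reachable a b := by
  have hb : G.IsBridge s(a, b) := by
    rw [isAcyclic_iff_forall_edge_isBridge] at hacyc
    exact hacyc ((mem_edgeSet _).mpr hab)
  exact isBridge_iff.mp hb

lemma reachable_delete_or {G : SimpleGraph V} {a b : V} (hab : G.Adj a b) (v : V) :
    G.Reachable a v ↔
      (G \ fromEdgeSet {s(a, b)}).Reachable a v ∨ (G \ fromEdgeSet {s(a, b)}).Reachable b v := by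
  constructor
  · rintro ⟨p⟩
    rcases reachable_split a b p with h1 | ⟨h1, h2⟩ | ⟨h1, h2⟩
    · exact Or.inl h1
    · exact Or.inr h2
    · exact Or.inl h2
  · rintro (h | h)
    · exact h.mono sdiff_le
    · exact hab.reachable.trans (h.mono sdiff_le)

lemma isAcyclic_anti {G H : SimpleGraph V} (h : H ≤ G) (hG : G.IsAcyclic) : H.IsAcyclic :=
  fun _ c hc => hG (c.mapLe h) ((Walk.mapLe_isCycle h).mpr hc)

lemma wAt_split [Fintype V] {G : SimpleGraph V} (hacyc : G.IsAcyclic) {a b : V}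
    (hab : G.Adj a b) :
    wAt (G \ fromEdgeSet {s(a, b)}) a + wAt (G \ fromEdgeSet {s(a, b)}) b + dist a b
      ≤ wAt G a := by
  classical
  set G' := G \ fromEdgeSet {s(a, b)} with hG'
  have hle : G' ≤ G := sdiff_le
  set FA := (Set.toFinite {e | e ∈ G'.edgeSet ∧ ∀ v ∈ e, G'.Reachable a v}).toFinset with hFA
  set FB := (Set.toFinite {e | e ∈ G'.edgeSet ∧ ∀ v ∈ e, G'.Reachable b v}).toFinset with hFB
  have hdisj : Disjoint FA FB := by
    rw [Finset.disjoint_left]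
    intro e heA heB
    rw [hFA, Set.Finite.mem_toFinset] at heA
    rw [hFB, Set.Finite.mem_toFinset] at heB
    induction e using Sym2.ind with
    | _ x y =>
      have hax : G'.Reachable a x := heA.2 x (Sym2.mem_mk_left x y)
      have hbx : G'.Reachable b x := heB.2 x (Sym2.mem_mk_left x y)
      exact not_reachable_delete hacyc hab (hax.trans hbx.symm)
  have hab_notmem : s(a, b) ∉ FA ∪ FB := by
    intro h
    have : s(a, b) ∈ G'.edgeSet := by
      rcases Finset.mem_union.mp h with h | h
      · exact ((Set.Finite.mem_toFinset _).mp h).1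
      · exact ((Set.Finite.mem_toFinset _).mp h).1
    rw [hG', edgeSet_sdiff, edgeSet_fromEdgeSet] at this
    exact this.2 ⟨rfl, by simp [hab.ne]⟩
  have hsubset : insert s(a, b) (FA ∪ FB) ⊆
      (Set.toFinite {e | e ∈ G.edgeSet ∧ ∀ v ∈ e, G.Reachable a v}).toFinset := by
    intro e he
    rw [Set.Finite.mem_toFinset]
    rcases Finset.mem_insert.mp he with rfl | he
    · refine ⟨(mem_edgeSet _).mpr hab, ?_⟩
      intro v hv
      rcases Sym2.mem_iff.mp hv with rfl | rfl
      · exact Reachable.refl _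
      · exact hab.reachable
    · rcases Finset.mem_union.mp he with h | h
      · rw [Set.Finite.mem_toFinset] at h
        exact ⟨edgeSet_mono hle h.1, fun v hv => (h.2 v hv).mono hle⟩
      · rw [Set.Finite.mem_toFinset] at h
        exact ⟨edgeSet_mono hle h.1,
          fun v hv => hab.reachable.trans ((h.2 v hv).mono hle)⟩
  calc wAt G' a + wAt G' b + dist a b
      = ∑ e ∈ FA ∪ FB, ew e + ew s(a, b) := by
        rw [Finset.sum_union hdisj, ew_mk]; rfl
    _ = ∑ e ∈ insert s(a, b) (FA ∪ FB), ew e := by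
        rw [Finset.sum_insert hab_notmem]; ring
    _ ≤ _ := Finset.sum_le_sum_of_subset_of_nonneg hsubset fun e _ _ => ew_nonneg e

lemma tour_isolated [Fintype V] (G : SimpleGraph V) (a : V) (hiso : ∀ y, ¬ G.Adj a y) :
    ∃ L : List V, L.head? = some a ∧ L.getLast? = some a ∧
      (∀ v, v ∈ L ↔ G.Reachable a v) ∧ chainSum L ≤ 2 * wAt G a := by
  refine ⟨[a], rfl, rfl, ?_, ?_⟩
  · intro v
    simp only [List.mem_singleton]
    constructor
    · rintro rfl; exact Reachable.refl _
    · intro h; exact eq_of_reachable_isolated hiso h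
  · rw [chainSum_singleton]
    exact mul_nonneg (by norm_num) (wAt_nonneg G a)

/-- The doubled-tree tour: an acyclic graph admits a closed walk listing, starting and
ending at `a`, covering the component of `a`, of total length at most twice the weight. -/
lemma tour [Fintype V] :
    ∀ (n : ℕ) (G : SimpleGraph V), G.IsAcyclic →
      (G.edgeSet.toFinite.toFinset).card ≤ n → ∀ a : V,
      ∃ L : List V, L.head? = some a ∧ L.getLast? = some a ∧
        (∀ v, v ∈ L ↔ G.Reachable a v) ∧ chainSum L ≤ 2 * wAt G a := by
  intro n
  induction n with
  | zero =>
    intro G hacyc hcard a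
    refine tour_isolated G a fun y hy => ?_
    have hm : s(a, y) ∈ G.edgeSet.toFinite.toFinset := by
      rw [Set.Finite.mem_toFinset]; exact (mem_edgeSet _).mpr hy
    have := Finset.card_pos.mpr ⟨_, hm⟩
    omega
  | succ n ih =>
    intro G hacyc hcard a
    classical
    by_cases hex : ∃ b, G.Adj a b
    · obtain ⟨b, hab⟩ := hex
      set G' := G \ fromEdgeSet {s(a, b)} with hG'
      have hle : G' ≤ G := sdiff_le
      have hacyc' := isAcyclic_anti hle hacyc
      have hmem : s(a, b) ∈ G.edgeSet.toFinite.toFinset := by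
        rw [Set.Finite.mem_toFinset]; exact (mem_edgeSet _).mpr hab
      have hcard' : (G'.edgeSet.toFinite.toFinset).card ≤ n := by
        have he : G'.edgeSet.toFinite.toFinset = (G.edgeSet.toFinite.toFinset).erase s(a, b) := by
          ext e
          rw [Set.Finite.mem_toFinset, Finset.mem_erase, Set.Finite.mem_toFinset, hG',
            edgeSet_sdiff, edgeSet_fromEdgeSet]
          constructor
          · rintro ⟨h1, h2⟩
            refine ⟨fun hc => h2 ⟨hc ▸ rfl, ?_⟩, h1⟩
            subst hc
            simpa using hab.ne
          · rintro ⟨h1, h2⟩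
            exact ⟨h2, fun hc => h1 hc.1⟩
        rw [he, Finset.card_erase_of_mem hmem]
        omega
      obtain ⟨La, ha1, ha2, ha3, ha4⟩ := ih G' hacyc' hcard' a
      obtain ⟨Lb, hb1, hb2, hb3, hb4⟩ := ih G' hacyc' hcard' b
      obtain ⟨ta, rfl⟩ : ∃ ta, La = a :: ta := by
        cases La with
        | nil => simp at ha1
        | cons x t => exact ⟨t, by simp_all⟩
      refine ⟨(a :: ta) ++ (Lb ++ [a]), by simp, ?_, ?_, ?_⟩
      · rw [List.getLast?_append, List.getLast?_concat]
        rfl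
      · intro v
        rw [reachable_delete_or hab v, ← hG']
        simp only [List.mem_append, List.mem_singleton, ha3, hb3]
        constructor
        · rintro (h | h | rfl)
          · exact Or.inl h
          · exact Or.inr h
          · exact Or.inl (Reachable.refl _)
        · rintro (h | h)
          · exact Or.inl h
          · exact Or.inr (Or.inl h)
      · have e1 : chainSum ((a :: ta) ++ (Lb ++ [a]))
            = chainSum (a :: ta) + dist a b + chainSum (Lb ++ [a]) := by
          refine chainSum_append_of ha2 ?_
          cases Lb with
          | nil => simp at hb1
          | cons x t => simp_all
        have e2 : chainSum (Lb ++ [a]) = chainSum Lb + dist b a + chainSum [a] :=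
          chainSum_append_of hb2 rfl
        have hsplit := wAt_split hacyc hab
        rw [e1, e2, chainSum_singleton]
        rw [dist_comm b a]
        rw [← hG'] at hsplit
        linarith
    · push_neg at hex
      exact tour_isolated G a hex

lemma start_edge_mem {H : SimpleGraph V} {x y : V} (q : H.Walk x y) (hxy : x ≠ y) :
    ∃ z, H.Adj x z ∧ s(x, z) ∈ q.edges := by
  cases q with
  | nil => exact absurd rfl hxy
  | cons h p => exact ⟨_, h, List.mem_cons_self⟩

lemma not_isCycle_at {H : SimpleGraph V} {a b : V} (hab : a ≠ b)
    (hnb : ∀ y, H.Adj a y → y = b) (w : H.Walk a a) : ¬ w.IsCycle := by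
  intro hw
  cases w with
  | nil => exact hw.ne_nil rfl
  | cons h p =>
    rename_i x
    have hx : x = b := hnb _ h
    have hxa : x ≠ a := fun h' => hab (h' ▸ hx.symm ▸ rfl : a = b)
    obtain ⟨z, hz, hze⟩ := start_edge_mem p.reverse hxa.symm
    have hzb : z = b := hnb _ hz
    have hze' : s(a, z) ∈ p.edges := by
      rwa [Walk.edges_reverse, List.mem_reverse] at hze
    have hxz : s(a, x) = s(a, z) := by rw [hx, hzb]
    have hpe : s(a, x) ∈ p.edges := by rw [hxz]; exact hze'
    have hnodup : (s(a, x) :: p.edges).Nodup := by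
      have := hw.isTrail.edges_nodup
      simpa using this
    exact (List.nodup_cons.mp hnodup).1 hpe

lemma isAcyclic_sup_pendant {G : SimpleGraph V} {a b : V} (hab : a ≠ b)
    (ha : ∀ y, ¬ G.Adj a y) (hG : G.IsAcyclic) :
    (G ⊔ fromEdgeSet {s(a, b)}).IsAcyclic := by
  classical
  intro u c hc
  have hnb : ∀ y, (G ⊔ fromEdgeSet {s(a, b)}).Adj a y → y = b := by
    intro y hy
    rcases hy with h | h
    · exact absurd h (ha y)
    · have h1 : s(a, y) = s(a, b) := ((fromEdgeSet_adj _).mp h).1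
      rcases Sym2.eq_iff.mp h1 with ⟨_, rfl⟩ | ⟨h2, h3⟩
      · rfl
      · exact absurd h2 hab
  by_cases hmem : a ∈ c.support
  · exact not_isCycle_at hab hnb (c.rotate a hmem) (hc.rotate hmem)
  · have hedges : ∀ e ∈ c.edges, e ∈ G.edgeSet := by
      intro e he
      have heH : e ∈ (G ⊔ fromEdgeSet {s(a, b)}).edgeSet := c.edges_subset_edgeSet he
      rw [edgeSet_sup] at heH
      rcases heH with h | h
      · exact h
      · exfalso
        rw [edgeSet_fromEdgeSet] at h
        have : e = s(a, b) := h.1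
        subst this
        exact hmem (c.fst_mem_support_of_mem_edges he)
    exact hG (c.transfer G hedges) (hc.transfer hedges)

/-- From a nonempty duplicate-free list one can build a spanning tree of its members
whose weight is at most the chain sum of the list. -/
lemma tree_of_list [Fintype V] :
    ∀ L : List V, L ≠ [] → L.Nodup →
      ∃ G : SimpleGraph V, G.IsAcyclic ∧ (∀ x ∈ L, ∀ y ∈ L, G.Reachable x y) ∧
        (∀ x y, G.Adj x y → x ∈ L) ∧
        (∑ e ∈ G.edgeSet.toFinite.toFinset, ew e) ≤ chainSum L
  | [], hne, _ => absurd rfl hne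
  | [x], _, _ => by
      refine ⟨⊥, isAcyclic_bot, ?_, ?_, ?_⟩
      · intro u hu v hv
        simp only [List.mem_singleton] at hu hv
        subst hu; subst hv; exact Reachable.refl _
      · intro x y h; exact absurd h (by simp)
      · rw [chainSum_singleton]
        have : (⊥ : SimpleGraph V).edgeSet.toFinite.toFinset = ∅ := by
          ext e; simp [Set.Finite.mem_toFinset]
        rw [this, Finset.sum_empty]
  | a :: b :: t, _, hnd => by
      classical
      obtain ⟨G, hacyc, hreach, hsupp, hwt⟩ :=
        tree_of_list (b :: t) (by simp) hnd.of_cons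
      have hanotin : a ∉ b :: t := (List.nodup_cons.mp hnd).1
      have hab : a ≠ b := fun h => hanotin (h ▸ List.mem_cons_self)
      have haiso : ∀ y, ¬ G.Adj a y := fun y hy => hanotin (hsupp a y hy)
      set H := G ⊔ fromEdgeSet {s(a, b)} with hH
      have hGle : G ≤ H := le_sup_left
      have hadjab : H.Adj a b := by
        rw [hH]
        exact Or.inr ((fromEdgeSet_adj _).mpr ⟨rfl, hab⟩)
      refine ⟨H, isAcyclic_sup_pendant hab haiso hacyc, ?_, ?_, ?_⟩
      · intro x hx y hy
        have key : ∀ z ∈ a :: b :: t, H.Reachable a z := by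
          intro z hz
          rcases List.mem_cons.mp hz with rfl | hz
          · exact Reachable.refl _
          · exact hadjab.reachable.trans
              ((hreach b (List.mem_cons_self) z hz).mono hGle)
        exact (key x hx).symm.trans (key y hy)
      · intro x y hxy
        rcases hxy with h | h
        · exact List.mem_cons_of_mem _ (hsupp x y h)
        · have h1 : s(x, y) = s(a, b) := ((fromEdgeSet_adj _).mp h).1
          rcases Sym2.eq_iff.mp h1 with ⟨rfl, _⟩ | ⟨rfl, h2⟩
          · exact List.mem_cons_self
          · simp
      · have hE : H.edgeSet.toFinite.toFinset
            = insert s(a, b) (G.edgeSet.toFinite.toFinset) := by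
          ext e
          rw [Set.Finite.mem_toFinset, Finset.mem_insert, Set.Finite.mem_toFinset, hH,
            edgeSet_sup, edgeSet_fromEdgeSet]
          constructor
          · rintro (h | h)
            · exact Or.inr h
            · exact Or.inl h.1
          · rintro (rfl | h)
            · exact Or.inr ⟨rfl, by simpa using hab⟩
            · exact Or.inl h
        have hnm : s(a, b) ∉ G.edgeSet.toFinite.toFinset := by
          rw [Set.Finite.mem_toFinset]
          intro h
          exact haiso b ((mem_edgeSet _).mp h)
        rw [hE, Finset.sum_insert hnm, chainSum_cons_cons, ew_mk]
        exact add_le_add_right hwt _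

end Aux

/-- Restricting to a subset increases MST weight by at most a factor 2:
`w(MST(S')) ≤ 2 · w(MST(S))`. -/
theorem stmt_6 {V : Type*} [MetricSpace V] [Fintype V] [Nonempty V]
    (s : Set V) (hs : s.Nonempty)
    (T : SimpleGraph V) (hconn : T.Connected) (hacyc : T.IsAcyclic)
    (hmin : ∀ T'' : SimpleGraph V, T''.Connected → T''.IsAcyclic →
      graphWeight T ≤ graphWeight T'')
    (T' : SimpleGraph s) (hconn' : T'.Connected) (hacyc' : T'.IsAcyclic)
    (hmin' : ∀ T'' : SimpleGraph s, T''.Connected → T''.IsAcyclic →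
      @graphWeight s _ (Fintype.ofFinite s) T' ≤ @graphWeight s _ (Fintype.ofFinite s) T'') :
    @graphWeight s _ (Fintype.ofFinite s) T' ≤ 2 * graphWeight T := by
  classical
  obtain ⟨a, has⟩ := hs
  -- the weight of the whole tree equals the weight of the component of `a`
  have hwt : wAt T a = graphWeight T := by
    apply Finset.sum_congr ?_ (fun _ _ => rfl)
    ext e
    simp only [Set.Finite.mem_toFinset, Set.mem_setOf_eq]
    exact ⟨fun h => h.1, fun h => ⟨h, fun v hv => hconn.preconnected a v⟩⟩
  obtain ⟨L, h1, h2, h3, h4⟩ := tour (T.edgeSet.toFinite.toFinset).card T hacyc le_rfl a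
  set L' := L.filter (fun v => decide (v ∈ s)) with hL'
  have hsubL' : L'.Sublist L := List.filter_sublist
  set L'' := L'.dedup with hL''
  have hsub'' : L''.Sublist L' := L'.dedup_sublist
  have hmemL'' : ∀ x, x ∈ L'' ↔ (x ∈ L ∧ x ∈ s) := by
    intro x
    rw [hL'', List.mem_dedup, hL', List.mem_filter]
    simp
  have hL''s : ∀ x ∈ L'', x ∈ s := fun x hx => ((hmemL'' x).mp hx).2
  have hcov : ∀ x ∈ s, x ∈ L'' := fun x hx =>
    (hmemL'' x).mpr ⟨(h3 x).mpr (hconn.preconnected a x), hx⟩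
  have hnd : L''.Nodup := L'.nodup_dedup
  -- lift to the subtype
  set L3 : List ↥s := L''.attachWith (· ∈ s) hL''s with hL3
  have hmap : L3.map Subtype.val = L'' := List.attachWith_map_subtype_val hL''s
  have hnd3 : L3.Nodup := by
    apply List.Nodup.of_map Subtype.val
    rw [hmap]; exact hnd
  have hne3 : L3 ≠ [] := by
    intro h
    have ha'' : a ∈ L'' := hcov a has
    rw [← hmap, h] at ha''
    simp at ha''
  have hcov3 : ∀ x : ↥s, x ∈ L3 := by
    intro x
    have hx : (x : V) ∈ L'' := hcov x x.2
    rw [← hmap] at hx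
    obtain ⟨y, hy, hyx⟩ := List.mem_map.mp hx
    exact (Subtype.ext hyx : y = x) ▸ hy
  obtain ⟨G'', hacyc'', hreach'', _, hw''⟩ :=
    @tree_of_list ↥s _ (Fintype.ofFinite s) L3 hne3 hnd3
  have hconn'' : G''.Connected := by
    rw [connected_iff]
    exact ⟨fun x y => hreach'' x (hcov3 x) y (hcov3 y), ⟨⟨a, has⟩⟩⟩
  have hcs3 : chainSum L3 = chainSum L'' := by
    rw [← hmap]
    exact (chainSum_map Subtype.val (fun x y => (Subtype.dist_eq x y).symm) L3).symm
  have hle1 : @graphWeight s _ (Fintype.ofFinite s) T'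
      ≤ @graphWeight s _ (Fintype.ofFinite s) G'' := hmin' G'' hconn'' hacyc''
  have hle2 : @graphWeight s _ (Fintype.ofFinite s) G'' ≤ chainSum L3 := hw''
  have hle3 : chainSum L'' ≤ chainSum L := le_trans (chainSum_sublist hsub'')
    (chainSum_sublist hsubL')
  have hle4 : chainSum L ≤ 2 * graphWeight T := by rw [← hwt]; exact h4
  calc @graphWeight s _ (Fintype.ofFinite s) T'
      ≤ chainSum L3 := le_trans hle1 hle2
    _ = chainSum L'' := hcs3
    _ ≤ chainSum L := hle3
    _ ≤ 2 * graphWeight T := hle4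
end

section
/- Let Q be a path with path metric d_Q of stretch at most 2 (d_Q(u,v) ≤ 2·d(u,v) for u,v on Q), lying in a metric space, and suppose Q is s-sparse as a graph. Let p be a point and consider all level-i path-net points of Q (pairwise d_Q-distance ≥ 2^i) within d-distance c·2^i of p. Then the number of such points is at most 3cs + 1. -/
/-- Path distance along a path `v 0, v 1, ..., v k`. -/
noncomputable def pathDist {S : Type*} [MetricSpace S] (v : ℕ → S) (a b : ℕ) : ℝ :=
  ∑ j ∈ Finset.Ico (min a b) (max a b), dist (v j) (v (j + 1))

lemma pathDist_nonneg {S : Type*} [MetricSpace S] (v : ℕ → S) (a b : ℕ) :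
    0 ≤ pathDist v a b :=
  Finset.sum_nonneg fun _ _ => dist_nonneg

lemma pathDist_eq {S : Type*} [MetricSpace S] (v : ℕ → S) {a b : ℕ} (h : a ≤ b) :
    pathDist v a b = ∑ j ∈ Finset.Ico a b, dist (v j) (v (j + 1)) := by
  unfold pathDist
  rw [min_eq_left h, max_eq_right h]

lemma pathDist_add {S : Type*} [MetricSpace S] (v : ℕ → S) {a b c : ℕ}
    (h1 : a ≤ b) (h2 : b ≤ c) :
    pathDist v a c = pathDist v a b + pathDist v b c := by
  rw [pathDist_eq v (h1.trans h2), pathDist_eq v h1, pathDist_eq v h2,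
    Finset.sum_Ico_consecutive _ h1 h2]

lemma dist_le_pathDist {S : Type*} [MetricSpace S] (v : ℕ → S) {a b : ℕ} (h : a ≤ b) :
    dist (v a) (v b) ≤ pathDist v a b := by
  have H := dist_le_range_sum_dist (fun j => v (a + j)) (b - a)
  rw [pathDist_eq v h, Finset.sum_Ico_eq_sum_range]
  simpa [Nat.add_sub_cancel' h, ← Nat.add_assoc] using H

lemma chain_lemma {S : Type*} [MetricSpace S] (v : ℕ → S) (w : ℝ) (hw : 0 ≤ w) :
    ∀ (n : ℕ) (F : Finset ℕ) (hF : F.Nonempty), F.card = n →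
    (∀ a ∈ F, ∀ b ∈ F, a ≠ b → w ≤ pathDist v a b) →
    ((F.card : ℝ) - 1) * w ≤ pathDist v (F.min' hF) (F.max' hF) := by
  intro n
  induction n with
  | zero =>
    intro F hF hcard hnet
    rw [Finset.card_eq_zero] at hcard
    simp [hcard] at hF
  | succ n ih =>
    intro F hF hcard hnet
    rcases Nat.eq_zero_or_pos n with hn | hn
    · -- card F = 1
      subst hn
      obtain ⟨a, rfl⟩ := Finset.card_eq_one.mp hcard
      simp [pathDist, pathDist_nonneg]
    · -- card F ≥ 2
      have hcard2 : 1 < F.card := by omega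
      set M := F.max' hF with hM
      set F' := F.erase M with hF'def
      have hcard' : F'.card = n := by
        rw [hF'def, Finset.card_erase_of_mem (F.max'_mem hF)]; omega
      have hF' : F'.Nonempty := Finset.card_pos.mp (by omega)
      have hsub : F' ⊆ F := Finset.erase_subset _ _
      have hminF' : F'.min' hF' = F.min' hF := by
        have hmem : F.min' hF ∈ F' := by
          rw [hF'def, Finset.mem_erase]
          exact ⟨ne_of_lt (F.min'_lt_max'_of_card hcard2), F.min'_mem hF⟩
        apply le_antisymm (F'.min'_le _ hmem)
        exact F.min'_le _ (hsub (F'.min'_mem hF'))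
      have hmaxlt : F'.max' hF' < M := by
        have h1 : F'.max' hF' ∈ F.erase M := F'.max'_mem hF'
        have h2 := Finset.mem_erase.mp h1
        exact lt_of_le_of_ne (F.le_max' _ h2.2) h2.1
      have hle1 : F.min' hF ≤ F'.max' hF' := by
        rw [← hminF']
        exact F'.min'_le _ (F'.max'_mem hF')
      have hIH := ih F' hF' hcard' (fun a ha b hb hab => hnet a (hsub ha) b (hsub hb) hab)
      rw [hminF'] at hIH
      have hstep : w ≤ pathDist v (F'.max' hF') M := by
        apply hnet _ (hsub (F'.max'_mem hF')) _ (F.max'_mem hF) (ne_of_lt hmaxlt)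
      have hadd := pathDist_add v hle1 (le_of_lt hmaxlt)
      have : ((F.card : ℝ) - 1) * w = ((F'.card : ℝ) - 1) * w + w := by
        rw [hcard, hcard']
        push_cast
        ring
      rw [this, hadd]
      exact add_le_add hIH hstep

/-- On an `s`-sparse path of stretch at most 2, at most `3cs + 1` level-`i`
path-net points lie within distance `c·2^i` of any point `p`. -/
theorem stmt_18 {S : Type*} [MetricSpace S] (k : ℕ) (v : ℕ → S)
    (c s : ℝ) (i : ℤ) (hc : 0 < c) (hs : 0 < s)
    (hstretch : ∀ a ≤ k, ∀ b ≤ k, pathDist v a b ≤ 2 * dist (v a) (v b))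
    (hsparse : ∀ (x : S) (ρ : ℝ), 0 ≤ ρ →
      ∑ j ∈ (Finset.range k).filter
          (fun j => dist x (v j) ≤ ρ ∧ dist x (v (j + 1)) ≤ ρ),
        dist (v j) (v (j + 1)) ≤ s * ρ)
    (X : Set ℕ) (hXk : ∀ a ∈ X, a ≤ k)
    (hnet : ∀ a ∈ X, ∀ b ∈ X, a ≠ b → (2 : ℝ) ^ i ≤ pathDist v a b)
    (p : S) :
    ({a ∈ X | dist p (v a) ≤ c * 2 ^ i}).Finite ∧
      (({a ∈ X | dist p (v a) ≤ c * 2 ^ i}).ncard : ℝ) ≤ 3 * c * s + 1 := by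
  have h2i : (0:ℝ) < 2 ^ i := by positivity
  have hfin : ({a ∈ X | dist p (v a) ≤ c * 2 ^ i}).Finite :=
    (Set.finite_Iic k).subset (fun a ha => hXk a ha.1)
  refine ⟨hfin, ?_⟩
  rw [Set.ncard_eq_toFinset_card _ hfin]
  set F := hfin.toFinset with hFdef
  have hmem : ∀ a, a ∈ F ↔ a ∈ X ∧ dist p (v a) ≤ c * 2 ^ i := by
    intro a
    rw [hFdef, Set.Finite.mem_toFinset]
    exact Iff.rfl
  rcases le_or_gt F.card 1 with hcard1 | hcard2
  · have : (F.card : ℝ) ≤ 1 := by exact_mod_cast hcard1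
    nlinarith
  · have hF : F.Nonempty := Finset.card_pos.mp (by omega)
    set a0 := F.min' hF with ha0
    set aM := F.max' hF with haM
    have ha0M : a0 ≤ aM := F.min'_le _ (F.max'_mem hF)
    have ha0mem := (hmem a0).mp (F.min'_mem hF)
    have haMmem := (hmem aM).mp (F.max'_mem hF)
    have ha0k : a0 ≤ k := hXk _ ha0mem.1
    have haMk : aM ≤ k := hXk _ haMmem.1
    -- total length bound
    have htotal : pathDist v a0 aM ≤ 4 * c * 2 ^ i := by
      have h1 := hstretch a0 ha0k aM haMk
      have h2 : dist (v a0) (v aM) ≤ dist p (v a0) + dist p (v aM) := by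
        rw [dist_comm p (v a0)]
        exact dist_triangle _ _ _
      nlinarith [ha0mem.2, haMmem.2]
    -- per-vertex bound
    have hvert : ∀ j, a0 ≤ j → j ≤ aM → dist p (v j) ≤ 3 * c * 2 ^ i := by
      intro j hj1 hj2
      have hadd := pathDist_add v hj1 hj2
      rcases le_or_gt (pathDist v a0 j) (2 * c * 2 ^ i) with h | h
      · have h3 : dist p (v j) ≤ dist p (v a0) + dist (v a0) (v j) := dist_triangle _ _ _
        have h4 := dist_le_pathDist v hj1
        nlinarith [ha0mem.2]
      · have h5 : pathDist v j aM ≤ 2 * c * 2 ^ i := by linarith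
        have h3 : dist p (v j) ≤ dist p (v aM) + dist (v aM) (v j) := dist_triangle _ _ _
        have h4 := dist_le_pathDist v hj2
        rw [dist_comm (v aM) (v j)] at h3
        nlinarith [haMmem.2]
    -- sparsity bound
    have hsparse' : pathDist v a0 aM ≤ s * (3 * c * 2 ^ i) := by
      rw [pathDist_eq v ha0M]
      refine le_trans (Finset.sum_le_sum_of_subset_of_nonneg ?_ ?_)
        (hsparse p (3 * c * 2 ^ i) (by positivity))
      · intro j hj
        rw [Finset.mem_Ico] at hj
        rw [Finset.mem_filter, Finset.mem_range]
        exact ⟨lt_of_lt_of_le hj.2 haMk,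
          hvert j hj.1 (le_of_lt hj.2),
          hvert (j+1) (le_trans hj.1 (Nat.le_succ j)) hj.2⟩
      · intro _ _ _
        exact dist_nonneg
    -- chain bound
    have hchain := chain_lemma v ((2:ℝ) ^ i) (le_of_lt h2i) F.card F hF rfl
      (fun a ha b hb hab => hnet a ((hmem a).mp ha).1 b ((hmem b).mp hb).1 hab)
    rw [← ha0, ← haM] at hchain
    have hfinal : ((F.card : ℝ) - 1) * 2 ^ i ≤ (3 * c * s) * 2 ^ i := by
      calc ((F.card : ℝ) - 1) * 2 ^ i ≤ pathDist v a0 aM := hchain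
        _ ≤ s * (3 * c * 2 ^ i) := hsparse'
        _ = (3 * c * s) * 2 ^ i := by ring
    have := (mul_le_mul_iff_of_pos_right h2i).mp hfinal
    linarith
end
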